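/- Let C be a tidy LD category, 𝔣 a set of morphisms of C whose targets are all ⊗-products, u ∈ 𝔜 a non-empty word, f ∈ 𝔣, Ā ∈ Ob(C)^{|u|}, and h a morphism of C with target H^f_u(Ā) such that τ^f_u(Ā)∘h is not 𝔣-analysable. Then: (i) h is neither a component of δˡ, δʳ, ᾱ or ᾱ⁻¹, nor of the form id⅋h' or h'⅋id for any morphism h'; (ii) if h is a component of α then u = a⁻¹, and if h is a component of α⁻¹ then u = a; (iii) if h = id⊗h' for some morphism h', then ter(u) = a and τ^f_{init(u)}(Ā_{≥2})∘h' is not 𝔣-analysable; (iv) if h = h'⊗id for some morphism h', then ter(u) = a⁻¹ and τ^f_{init(u)}(Ā_{≤|u|−1})∘h' is not 𝔣-analysable. -/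

import Mathlib

open CategoryTheory

namespace LDCoherence

universe v u v₁ u₁ v₂ u₂

/-- A (unitless) linearly distributive category structure on a category `C`. -/
structure LD (C : Type u) [Category.{v} C] where
  ot : C → C → C
  pa : C → C → C
  otHom : ∀ {X₁ Y₁ X₂ Y₂ : C}, (X₁ ⟶ Y₁) → (X₂ ⟶ Y₂) → (ot X₁ X₂ ⟶ ot Y₁ Y₂)
  paHom : ∀ {X₁ Y₁ X₂ Y₂ : C}, (X₁ ⟶ Y₁) → (X₂ ⟶ Y₂) → (pa X₁ X₂ ⟶ pa Y₁ Y₂)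
  otHom_id : ∀ X Y : C, otHom (𝟙 X) (𝟙 Y) = 𝟙 (ot X Y)
  otHom_comp :
    ∀ {X₁ Y₁ Z₁ X₂ Y₂ Z₂ : C} (f₁ : X₁ ⟶ Y₁) (g₁ : Y₁ ⟶ Z₁) (f₂ : X₂ ⟶ Y₂) (g₂ : Y₂ ⟶ Z₂),
      otHom (f₁ ≫ g₁) (f₂ ≫ g₂) = otHom f₁ f₂ ≫ otHom g₁ g₂
  paHom_id : ∀ X Y : C, paHom (𝟙 X) (𝟙 Y) = 𝟙 (pa X Y)
  paHom_comp :
    ∀ {X₁ Y₁ Z₁ X₂ Y₂ Z₂ : C} (f₁ : X₁ ⟶ Y₁) (g₁ : Y₁ ⟶ Z₁) (f₂ : X₂ ⟶ Y₂) (g₂ : Y₂ ⟶ Z₂),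
      paHom (f₁ ≫ g₁) (f₂ ≫ g₂) = paHom f₁ f₂ ≫ paHom g₁ g₂
  α : ∀ A B E : C, ot A (ot B E) ⟶ ot (ot A B) E
  αInv : ∀ A B E : C, ot (ot A B) E ⟶ ot A (ot B E)
  pα : ∀ A B E : C, pa A (pa B E) ⟶ pa (pa A B) E
  pαInv : ∀ A B E : C, pa (pa A B) E ⟶ pa A (pa B E)
  δl : ∀ A B E : C, ot A (pa B E) ⟶ pa (ot A B) E
  δr : ∀ A B E : C, ot (pa A B) E ⟶ pa A (ot B E)
  α_αInv : ∀ A B E : C, α A B E ≫ αInv A B E = 𝟙 _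
  αInv_α : ∀ A B E : C, αInv A B E ≫ α A B E = 𝟙 _
  pα_pαInv : ∀ A B E : C, pα A B E ≫ pαInv A B E = 𝟙 _
  pαInv_pα : ∀ A B E : C, pαInv A B E ≫ pα A B E = 𝟙 _
  α_natural :
    ∀ {A A' B B' E E' : C} (f : A ⟶ A') (g : B ⟶ B') (h : E ⟶ E'),
      otHom f (otHom g h) ≫ α A' B' E' = α A B E ≫ otHom (otHom f g) h
  pα_natural :
    ∀ {A A' B B' E E' : C} (f : A ⟶ A') (g : B ⟶ B') (h : E ⟶ E'),
      paHom f (paHom g h) ≫ pα A' B' E' = pα A B E ≫ paHom (paHom f g) h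
  δl_natural :
    ∀ {A A' B B' E E' : C} (f : A ⟶ A') (g : B ⟶ B') (h : E ⟶ E'),
      otHom f (paHom g h) ≫ δl A' B' E' = δl A B E ≫ paHom (otHom f g) h
  δr_natural :
    ∀ {A A' B B' E E' : C} (f : A ⟶ A') (g : B ⟶ B') (h : E ⟶ E'),
      otHom (paHom f g) h ≫ δr A' B' E' = δr A B E ≫ paHom f (otHom g h)
  P1 : ∀ A B E D : C,
    α A B (ot E D) ≫ α (ot A B) E D =
      otHom (𝟙 A) (α B E D) ≫ α A (ot B E) D ≫ otHom (α A B E) (𝟙 D)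
  P2 : ∀ A B E D : C,
    α A B (pa E D) ≫ δl (ot A B) E D =
      otHom (𝟙 A) (δl B E D) ≫ δl A (ot B E) D ≫ paHom (α A B E) (𝟙 D)
  P3 : ∀ A B E D : C,
    otHom (𝟙 A) (δr B E D) ≫ δl A B (ot E D) =
      α A (pa B E) D ≫ otHom (δl A B E) (𝟙 D) ≫ δr (ot A B) E D
  P4 : ∀ A B E D : C,
    δl A B (pa E D) ≫ pα (ot A B) E D =
      otHom (𝟙 A) (pα B E D) ≫ δl A (pa B E) D ≫ paHom (δl A B E) (𝟙 D)
  P5 : ∀ A B E D : C,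
    δr A B (ot E D) ≫ paHom (𝟙 A) (α B E D) =
      α (pa A B) E D ≫ otHom (δr A B E) (𝟙 D) ≫ δr A (ot B E) D
  P6 : ∀ A B E D : C,
    δl (pa A B) E D ≫ paHom (δr A B E) (𝟙 D) =
      δr A B (pa E D) ≫ paHom (𝟙 A) (δl B E D) ≫ pα A (ot B E) D
  P7 : ∀ A B E D : C,
    otHom (pα A B E) (𝟙 D) ≫ δr (pa A B) E D =
      δr A (pa B E) D ≫ paHom (𝟙 A) (δr B E D) ≫ pα A B (ot E D)
  P8 : ∀ A B E D : C,
    pα A B (pa E D) ≫ pα (pa A B) E D =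
      paHom (𝟙 A) (pα B E D) ≫ pα A (pa B E) D ≫ paHom (pα A B E) (𝟙 D)

variable {C : Type u} [Category.{v} C]

/-- Tidiness of a linearly distributive category. -/
def LD.Tidy (L : LD C) : Prop :=
  (∀ A₁ A₂ B₁ B₂ : C, L.ot A₁ A₂ = L.ot B₁ B₂ → A₁ = B₁ ∧ A₂ = B₂) ∧
  (∀ A₁ A₂ B₁ B₂ : C, L.pa A₁ A₂ = L.pa B₁ B₂ → A₁ = B₁ ∧ A₂ = B₂) ∧
  (∀ A₁ A₂ B₁ B₂ : C, L.ot A₁ A₂ ≠ L.pa B₁ B₂)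

/-- Generators of the free monoid 𝔜. -/
inductive YGen : Type
  | a : YGen
  | ainv : YGen

/-- Generators of the free monoid 𝔝. -/
inductive ZGen : Type
  | pa : ZGen
  | painv : ZGen
  | dl : ZGen
  | dr : ZGen

/-- A word in the free monoid 𝔜 together with a matching vector of objects:
each letter carries the object of the vector that it consumes in the recursions
defining `H`, `L`, `R` and `τ`.  The outermost constructor is the terminal letter. -/
inductive YW (C : Type u) : Type u
  | nil : YW C
  | a : C → YW C → YW C
  | ainv : C → YW C → YW C

/-- The underlying word in 𝔜 of a word-with-vector. -/
def YW.word {C : Type u} : YW C → List YGen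
  | .nil => []
  | .a _ w => YGen.a :: w.word
  | .ainv _ w => YGen.ainv :: w.word

/-- A word in the free monoid 𝔝 together with a matching vector of objects. -/
inductive ZW (C : Type u) : Type u
  | nil : ZW C
  | pa : C → ZW C → ZW C
  | painv : C → ZW C → ZW C
  | dl : C → ZW C → ZW C
  | dr : C → ZW C → ZW C

/-- The underlying word in 𝔝 of a word-with-vector. -/
def ZW.word {C : Type u} : ZW C → List ZGen
  | .nil => []
  | .pa _ w => ZGen.pa :: w.word
  | .painv _ w => ZGen.painv :: w.word
  | .dl _ w => ZGen.dl :: w.word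
  | .dr _ w => ZGen.dr :: w.word

/-- The functor `H^f_u` (object part), for `f` with source `X` and target an ⊗-product. -/
def Hot (L : LD C) (X : C) : YW C → C
  | .nil => X
  | .a A w => L.ot A (Hot L X w)
  | .ainv A w => L.ot (Hot L X w) A

/-- The functor `L^f_u` (object part), for `f` with target `L.ot Y Z`. -/
def Lot (L : LD C) (Y : C) : YW C → C
  | .nil => Y
  | .a A w => L.ot A (Lot L Y w)
  | .ainv _ w => Lot L Y w

/-- The functor `R^f_u` (object part), for `f` with target `L.ot Y Z`. -/
def Rot (L : LD C) (Z : C) : YW C → C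
  | .nil => Z
  | .a _ w => Rot L Z w
  | .ainv A w => L.ot (Rot L Z w) A

/-- The natural transformation `τ^f_u` (componentwise). -/
def tau (L : LD C) {X Y Z : C} (f : X ⟶ L.ot Y Z) :
    (w : YW C) → (Hot L X w ⟶ L.ot (Lot L Y w) (Rot L Z w))
  | .nil => f
  | .a A w => L.otHom (𝟙 A) (tau L f w) ≫ L.α A (Lot L Y w) (Rot L Z w)
  | .ainv A w => L.otHom (tau L f w) (𝟙 A) ≫ L.αInv (Lot L Y w) (Rot L Z w) A

/-- The functor `H^f_u` (object part), for `f` with source `X` and target a ⅋-product. -/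
def Hpa (L : LD C) (X : C) : ZW C → C
  | .nil => X
  | .pa A w => L.pa A (Hpa L X w)
  | .painv A w => L.pa (Hpa L X w) A
  | .dl A w => L.ot A (Hpa L X w)
  | .dr A w => L.ot (Hpa L X w) A

/-- The functor `L^f_u` (object part), for `f` with target `L.pa Y Z`. -/
def Lpa (L : LD C) (Y : C) : ZW C → C
  | .nil => Y
  | .pa A w => L.pa A (Lpa L Y w)
  | .painv _ w => Lpa L Y w
  | .dl A w => L.ot A (Lpa L Y w)
  | .dr _ w => Lpa L Y w

/-- The functor `R^f_u` (object part), for `f` with target `L.pa Y Z`. -/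
def Rpa (L : LD C) (Z : C) : ZW C → C
  | .nil => Z
  | .pa _ w => Rpa L Z w
  | .painv A w => L.pa (Rpa L Z w) A
  | .dl _ w => Rpa L Z w
  | .dr A w => L.ot (Rpa L Z w) A

/-- The natural transformation `κ^f_u` (componentwise). -/
def kappa (L : LD C) {X Y Z : C} (f : X ⟶ L.pa Y Z) :
    (w : ZW C) → (Hpa L X w ⟶ L.pa (Lpa L Y w) (Rpa L Z w))
  | .nil => f
  | .pa A w => L.paHom (𝟙 A) (kappa L f w) ≫ L.pα A (Lpa L Y w) (Rpa L Z w)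
  | .painv A w => L.paHom (kappa L f w) (𝟙 A) ≫ L.pαInv (Lpa L Y w) (Rpa L Z w) A
  | .dl A w => L.otHom (𝟙 A) (kappa L f w) ≫ L.δl A (Lpa L Y w) (Rpa L Z w)
  | .dr A w => L.otHom (kappa L f w) (𝟙 A) ≫ L.δr (Lpa L Y w) (Rpa L Z w) A

/-- `h` is a component of the associator `α`. -/
def IsAlphaComp (L : LD C) {W T : C} (h : W ⟶ T) : Prop :=
  ∃ (A B E : C) (h₁ : W = L.ot A (L.ot B E)) (h₂ : L.ot (L.ot A B) E = T),
    h = eqToHom h₁ ≫ L.α A B E ≫ eqToHom h₂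

/-- `h` is a component of the inverse associator `α⁻¹`. -/
def IsAlphaInvComp (L : LD C) {W T : C} (h : W ⟶ T) : Prop :=
  ∃ (A B E : C) (h₁ : W = L.ot (L.ot A B) E) (h₂ : L.ot A (L.ot B E) = T),
    h = eqToHom h₁ ≫ L.αInv A B E ≫ eqToHom h₂

/-- `h` is a component of the associator `ᾱ`. -/
def IsPalphaComp (L : LD C) {W T : C} (h : W ⟶ T) : Prop :=
  ∃ (A B E : C) (h₁ : W = L.pa A (L.pa B E)) (h₂ : L.pa (L.pa A B) E = T),
    h = eqToHom h₁ ≫ L.pα A B E ≫ eqToHom h₂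

/-- `h` is a component of the inverse associator `ᾱ⁻¹`. -/
def IsPalphaInvComp (L : LD C) {W T : C} (h : W ⟶ T) : Prop :=
  ∃ (A B E : C) (h₁ : W = L.pa (L.pa A B) E) (h₂ : L.pa A (L.pa B E) = T),
    h = eqToHom h₁ ≫ L.pαInv A B E ≫ eqToHom h₂

/-- `h` is a component of the left distributor `δˡ`. -/
def IsDlComp (L : LD C) {W T : C} (h : W ⟶ T) : Prop :=
  ∃ (A B E : C) (h₁ : W = L.ot A (L.pa B E)) (h₂ : L.pa (L.ot A B) E = T),
    h = eqToHom h₁ ≫ L.δl A B E ≫ eqToHom h₂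

/-- `h` is a component of the right distributor `δʳ`. -/
def IsDrComp (L : LD C) {W T : C} (h : W ⟶ T) : Prop :=
  ∃ (A B E : C) (h₁ : W = L.ot (L.pa A B) E) (h₂ : L.pa A (L.ot B E) = T),
    h = eqToHom h₁ ≫ L.δr A B E ≫ eqToHom h₂

/-- `h` is of the form `id_A ⅋ h'` for some morphism `h'`. -/
def IsIdPaLeft (L : LD C) {W T : C} (h : W ⟶ T) : Prop :=
  ∃ (A W' T' : C) (h' : W' ⟶ T') (h₁ : W = L.pa A W') (h₂ : L.pa A T' = T),
    h = eqToHom h₁ ≫ L.paHom (𝟙 A) h' ≫ eqToHom h₂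

/-- `h` is of the form `h' ⅋ id_A` for some morphism `h'`. -/
def IsIdPaRight (L : LD C) {W T : C} (h : W ⟶ T) : Prop :=
  ∃ (A W' T' : C) (h' : W' ⟶ T') (h₁ : W = L.pa W' A) (h₂ : L.pa T' A = T),
    h = eqToHom h₁ ≫ L.paHom h' (𝟙 A) ≫ eqToHom h₂

/-- The set `Id^⊗` of identities of ⊗-products, as a set of morphisms into ⊗-products. -/
def IdOtSet (L : LD C) ⦃X Y Z : C⦄ (f : X ⟶ L.ot Y Z) : Prop :=
  ∃ hE : X = L.ot Y Z, f = eqToHom hE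

/-- The set `Id^⅋` of identities of ⅋-products, as a set of morphisms into ⅋-products. -/
def IdPaSet (L : LD C) ⦃X Y Z : C⦄ (f : X ⟶ L.pa Y Z) : Prop :=
  ∃ hE : X = L.pa Y Z, f = eqToHom hE

/-- `𝔣`-analysability for a set `𝔣` of morphisms whose targets are ⊗-products:
`g = (g' ⊗ g'') ∘ τ^f_u(Ā)` for some `f ∈ 𝔣`, word `u`, vector `Ā` and morphisms `g', g''`. -/
def OtAnalysable (L : LD C) (𝔣 : ∀ ⦃X Y Z : C⦄, (X ⟶ L.ot Y Z) → Prop)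
    {P T : C} (g : P ⟶ T) : Prop :=
  ∃ (X Y Z : C) (f : X ⟶ L.ot Y Z), 𝔣 f ∧
    ∃ (w : YW C) (Q₁ Q₂ : C) (g' : Lot L Y w ⟶ Q₁) (g'' : Rot L Z w ⟶ Q₂)
      (hP : P = Hot L X w) (hT : L.ot Q₁ Q₂ = T),
      g = eqToHom hP ≫ tau L f w ≫ L.otHom g' g'' ≫ eqToHom hT

/-- `𝔣`-analysability for a set `𝔣` of morphisms whose targets are ⅋-products:
`g = (g' ⅋ g'') ∘ κ^f_u(Ā)` for some `f ∈ 𝔣`, word `u`, vector `Ā` and morphisms `g', g''`. -/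
def PaAnalysable (L : LD C) (𝔣 : ∀ ⦃X Y Z : C⦄, (X ⟶ L.pa Y Z) → Prop)
    {P T : C} (g : P ⟶ T) : Prop :=
  ∃ (X Y Z : C) (f : X ⟶ L.pa Y Z), 𝔣 f ∧
    ∃ (w : ZW C) (Q₁ Q₂ : C) (g' : Lpa L Y w ⟶ Q₁) (g'' : Rpa L Z w ⟶ Q₂)
      (hP : P = Hpa L X w) (hT : L.pa Q₁ Q₂ = T),
      g = eqToHom hP ≫ kappa L f w ≫ L.paHom g' g'' ≫ eqToHom hT

/-- Atomic morphisms of a (tidy) LD category. -/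
inductive Atomic (L : LD C) : ∀ {W T : C}, (W ⟶ T) → Prop
  | alpha (A B E : C) : Atomic L (L.α A B E)
  | alphaInv (A B E : C) : Atomic L (L.αInv A B E)
  | palpha (A B E : C) : Atomic L (L.pα A B E)
  | palphaInv (A B E : C) : Atomic L (L.pαInv A B E)
  | dl (A B E : C) : Atomic L (L.δl A B E)
  | dr (A B E : C) : Atomic L (L.δr A B E)
  | otRightId {W T : C} (f : W ⟶ T) (A : C) : Atomic L f → Atomic L (L.otHom f (𝟙 A))
  | otLeftId {W T : C} (f : W ⟶ T) (A : C) : Atomic L f → Atomic L (L.otHom (𝟙 A) f)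
  | paRightId {W T : C} (f : W ⟶ T) (A : C) : Atomic L f → Atomic L (L.paHom f (𝟙 A))
  | paLeftId {W T : C} (f : W ⟶ T) (A : C) : Atomic L f → Atomic L (L.paHom (𝟙 A) f)

/-- Elementary morphisms: identities and finite composites of atomic morphisms. -/
inductive Elementary (L : LD C) : ∀ {W T : C}, (W ⟶ T) → Prop
  | id (X : C) : Elementary L (𝟙 X)
  | of {W T : C} {f : W ⟶ T} : Atomic L f → Elementary L f
  | comp {W T U : C} {f : W ⟶ T} {g : T ⟶ U} :
      Elementary L f → Elementary L g → Elementary L (f ≫ g)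

/-- A strict Frobenius linearly distributive functor between LD categories. -/
structure StrictLDFunctor (Cc : Type u₁) [Category.{v₁} Cc] (Dd : Type u₂) [Category.{v₂} Dd]
    (LC : LD Cc) (LDd : LD Dd) where
  toFunctor : Cc ⥤ Dd
  obj_ot : ∀ X Y : Cc, toFunctor.obj (LC.ot X Y) = LDd.ot (toFunctor.obj X) (toFunctor.obj Y)
  obj_pa : ∀ X Y : Cc, toFunctor.obj (LC.pa X Y) = LDd.pa (toFunctor.obj X) (toFunctor.obj Y)
  map_ot : ∀ {X₁ Y₁ X₂ Y₂ : Cc} (f : X₁ ⟶ Y₁) (g : X₂ ⟶ Y₂),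
    toFunctor.map (LC.otHom f g) =
      eqToHom (obj_ot X₁ X₂) ≫ LDd.otHom (toFunctor.map f) (toFunctor.map g) ≫
        eqToHom (obj_ot Y₁ Y₂).symm
  map_pa : ∀ {X₁ Y₁ X₂ Y₂ : Cc} (f : X₁ ⟶ Y₁) (g : X₂ ⟶ Y₂),
    toFunctor.map (LC.paHom f g) =
      eqToHom (obj_pa X₁ X₂) ≫ LDd.paHom (toFunctor.map f) (toFunctor.map g) ≫
        eqToHom (obj_pa Y₁ Y₂).symm
  map_α : ∀ A B E : Cc,
    toFunctor.map (LC.α A B E) =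
      eqToHom (by simp only [obj_ot]) ≫
        LDd.α (toFunctor.obj A) (toFunctor.obj B) (toFunctor.obj E) ≫
        eqToHom (by simp only [obj_ot])
  map_αInv : ∀ A B E : Cc,
    toFunctor.map (LC.αInv A B E) =
      eqToHom (by simp only [obj_ot]) ≫
        LDd.αInv (toFunctor.obj A) (toFunctor.obj B) (toFunctor.obj E) ≫
        eqToHom (by simp only [obj_ot])
  map_pα : ∀ A B E : Cc,
    toFunctor.map (LC.pα A B E) =
      eqToHom (by simp only [obj_pa]) ≫
        LDd.pα (toFunctor.obj A) (toFunctor.obj B) (toFunctor.obj E) ≫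
        eqToHom (by simp only [obj_pa])
  map_pαInv : ∀ A B E : Cc,
    toFunctor.map (LC.pαInv A B E) =
      eqToHom (by simp only [obj_pa]) ≫
        LDd.pαInv (toFunctor.obj A) (toFunctor.obj B) (toFunctor.obj E) ≫
        eqToHom (by simp only [obj_pa])
  map_δl : ∀ A B E : Cc,
    toFunctor.map (LC.δl A B E) =
      eqToHom (by simp only [obj_ot, obj_pa]) ≫
        LDd.δl (toFunctor.obj A) (toFunctor.obj B) (toFunctor.obj E) ≫
        eqToHom (by simp only [obj_ot, obj_pa])
  map_δr : ∀ A B E : Cc,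
    toFunctor.map (LC.δr A B E) =
      eqToHom (by simp only [obj_ot, obj_pa]) ≫
        LDd.δr (toFunctor.obj A) (toFunctor.obj B) (toFunctor.obj E) ≫
        eqToHom (by simp only [obj_ot, obj_pa])

/-- A (unitless) Frobenius linearly distributive functor between LD categories. -/
structure FrobLDFunctor (Cc : Type u₁) [Category.{v₁} Cc] (Dd : Type u₂) [Category.{v₂} Dd]
    (LC : LD Cc) (LDd : LD Dd) where
  toFunctor : Cc ⥤ Dd
  μ : ∀ X Y : Cc, LDd.ot (toFunctor.obj X) (toFunctor.obj Y) ⟶ toFunctor.obj (LC.ot X Y)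
  Δ : ∀ X Y : Cc, toFunctor.obj (LC.pa X Y) ⟶ LDd.pa (toFunctor.obj X) (toFunctor.obj Y)
  μ_natural : ∀ {X₁ Y₁ X₂ Y₂ : Cc} (f : X₁ ⟶ Y₁) (g : X₂ ⟶ Y₂),
    LDd.otHom (toFunctor.map f) (toFunctor.map g) ≫ μ Y₁ Y₂ =
      μ X₁ X₂ ≫ toFunctor.map (LC.otHom f g)
  Δ_natural : ∀ {X₁ Y₁ X₂ Y₂ : Cc} (f : X₁ ⟶ Y₁) (g : X₂ ⟶ Y₂),
    toFunctor.map (LC.paHom f g) ≫ Δ Y₁ Y₂ =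
      Δ X₁ X₂ ≫ LDd.paHom (toFunctor.map f) (toFunctor.map g)
  H1 : ∀ A B E : Cc,
    LDd.α (toFunctor.obj A) (toFunctor.obj B) (toFunctor.obj E) ≫
        LDd.otHom (μ A B) (𝟙 (toFunctor.obj E)) ≫ μ (LC.ot A B) E =
      LDd.otHom (𝟙 (toFunctor.obj A)) (μ B E) ≫ μ A (LC.ot B E) ≫ toFunctor.map (LC.α A B E)
  H2 : ∀ A B E : Cc,
    LDd.otHom (𝟙 (toFunctor.obj A)) (Δ B E) ≫
        LDd.δl (toFunctor.obj A) (toFunctor.obj B) (toFunctor.obj E) ≫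
        LDd.paHom (μ A B) (𝟙 (toFunctor.obj E)) =
      μ A (LC.pa B E) ≫ toFunctor.map (LC.δl A B E) ≫ Δ (LC.ot A B) E
  H3 : ∀ A B E : Cc,
    LDd.otHom (Δ A B) (𝟙 (toFunctor.obj E)) ≫
        LDd.δr (toFunctor.obj A) (toFunctor.obj B) (toFunctor.obj E) ≫
        LDd.paHom (𝟙 (toFunctor.obj A)) (μ B E) =
      μ (LC.pa A B) E ≫ toFunctor.map (LC.δr A B E) ≫ Δ A (LC.ot B E)
  H4 : ∀ A B E : Cc,
    Δ A (LC.pa B E) ≫ LDd.paHom (𝟙 (toFunctor.obj A)) (Δ B E) ≫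
        LDd.pα (toFunctor.obj A) (toFunctor.obj B) (toFunctor.obj E) =
      toFunctor.map (LC.pα A B E) ≫ Δ (LC.pa A B) E ≫
        LDd.paHom (Δ A B) (𝟙 (toFunctor.obj E))

variable {Cc : Type u₁} [Category.{v₁} Cc] {Dd : Type u₂} [Category.{v₂} Dd]
  {LC : LD Cc} {LDd : LD Dd}

/-- Tidiness of a Frobenius LD functor: the image of an object is never a tensor product. -/
def FrobLDFunctor.TidyF (F : FrobLDFunctor Cc Dd LC LDd) : Prop :=
  ∀ (A : Cc) (P Q : Dd),
    F.toFunctor.obj A ≠ LDd.ot P Q ∧ F.toFunctor.obj A ≠ LDd.pa P Q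

/-- Multiplicative morphisms of the target category of a Frobenius LD functor. -/
inductive Multiplicative (F : FrobLDFunctor Cc Dd LC LDd) : ∀ {W T : Dd}, (W ⟶ T) → Prop
  | id (X : Cc) : Multiplicative F (𝟙 (F.toFunctor.obj X))
  | mu {W₁ W₂ : Dd} {X Y : Cc} (f : W₁ ⟶ F.toFunctor.obj X) (g : W₂ ⟶ F.toFunctor.obj Y) :
      Multiplicative F f → Multiplicative F g →
      Multiplicative F (LDd.otHom f g ≫ F.μ X Y)

/-- `F`-atomic morphisms of the target category of a Frobenius LD functor. -/
inductive FAtomic (F : FrobLDFunctor Cc Dd LC LDd) : ∀ {W T : Dd}, (W ⟶ T) → Prop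
  | alpha (A B E : Dd) : FAtomic F (LDd.α A B E)
  | alphaInv (A B E : Dd) : FAtomic F (LDd.αInv A B E)
  | palpha (A B E : Dd) : FAtomic F (LDd.pα A B E)
  | palphaInv (A B E : Dd) : FAtomic F (LDd.pαInv A B E)
  | dl (A B E : Dd) : FAtomic F (LDd.δl A B E)
  | dr (A B E : Dd) : FAtomic F (LDd.δr A B E)
  | mu (X Y : Cc) : FAtomic F (F.μ X Y)
  | delta (X Y : Cc) : FAtomic F (F.Δ X Y)
  | map {X Y : Cc} (f : X ⟶ Y) : Elementary LC f → FAtomic F (F.toFunctor.map f)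
  | otRightId {W T : Dd} (f : W ⟶ T) (A : Dd) : FAtomic F f → FAtomic F (LDd.otHom f (𝟙 A))
  | otLeftId {W T : Dd} (f : W ⟶ T) (A : Dd) : FAtomic F f → FAtomic F (LDd.otHom (𝟙 A) f)
  | paRightId {W T : Dd} (f : W ⟶ T) (A : Dd) : FAtomic F f → FAtomic F (LDd.paHom f (𝟙 A))
  | paLeftId {W T : Dd} (f : W ⟶ T) (A : Dd) : FAtomic F f → FAtomic F (LDd.paHom (𝟙 A) f)

/-- `F`-elementary morphisms: identities and finite composites of `F`-atomic morphisms. -/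
inductive FElementary (F : FrobLDFunctor Cc Dd LC LDd) : ∀ {W T : Dd}, (W ⟶ T) → Prop
  | id (X : Dd) : FElementary F (𝟙 X)
  | of {W T : Dd} {f : W ⟶ T} : FAtomic F f → FElementary F f
  | comp {W T U : Dd} {f : W ⟶ T} {g : T ⟶ U} :
      FElementary F f → FElementary F g → FElementary F (f ≫ g)

/-- The set `𝔡` of morphisms of the form `Δ ∘ F(κ^i_u(X̄))`, where `i` is the identity of a
⅋-product of the source category. -/
def frakD (F : FrobLDFunctor Cc Dd LC LDd) ⦃P Q₁ Q₂ : Dd⦄ (g : P ⟶ LDd.pa Q₁ Q₂) : Prop :=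
  ∃ (Y Z : Cc) (w : ZW Cc) (hP : P = F.toFunctor.obj (Hpa LC (LC.pa Y Z) w))
    (h₁ : F.toFunctor.obj (Lpa LC Y w) = Q₁) (h₂ : F.toFunctor.obj (Rpa LC Z w) = Q₂),
    g = eqToHom hP ≫ F.toFunctor.map (kappa LC (𝟙 (LC.pa Y Z)) w) ≫
        F.Δ (Lpa LC Y w) (Rpa LC Z w) ≫ eqToHom (by rw [h₁, h₂])

/-!
For non-empty `u`, `H^f_u(Ā)` is an ⊗-product, hence by tidiness not a ⅋-product, which rules out
the shapes in (i); tidiness also lines up the shape of `h` with the last one or two letters of `u`.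
In each mismatching case a pentagon or a naturality square rewrites `τ^f_u(Ā) ∘ h` as
`(g' ⊗ g'') ∘ τ^f_{u'}(Ā')` for another word `u'`, so it would be analysable. In the matching cases
of (iii) and (iv), analysability of `τ^f_{init(u)} ∘ h'` would propagate to `τ^f_u ∘ h`, since
`τ^f_{a·u} = α ∘ (id ⊗ τ^f_u)` and `τ^f_{a⁻¹·u} = α⁻¹ ∘ (τ^f_u ⊗ id)`.
-/

section Associator

variable (L : LD C)

instance LD.isIso_α (A B E : C) : IsIso (L.α A B E) :=
  ⟨⟨L.αInv A B E, L.α_αInv A B E, L.αInv_α A B E⟩⟩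

instance LD.isIso_otHom {X Y X' Y' : C} (f : X ⟶ Y) (g : X' ⟶ Y') [IsIso f] [IsIso g] :
    IsIso (L.otHom f g) :=
  ⟨⟨L.otHom (inv f) (inv g), by simp [← L.otHom_comp, L.otHom_id],
    by simp [← L.otHom_comp, L.otHom_id]⟩⟩

lemma LD.α_αInv_assoc (A B E : C) {T : C} (k : L.ot A (L.ot B E) ⟶ T) :
    L.α A B E ≫ L.αInv A B E ≫ k = k := by
  rw [← Category.assoc, L.α_αInv, Category.id_comp]

lemma LD.αInv_α_assoc (A B E : C) {T : C} (k : L.ot (L.ot A B) E ⟶ T) :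
    L.αInv A B E ≫ L.α A B E ≫ k = k := by
  rw [← Category.assoc, L.αInv_α, Category.id_comp]

lemma LD.otHom_id_left_comp {A X Y Z : C} (f : X ⟶ Y) (g : Y ⟶ Z) :
    L.otHom (𝟙 A) (f ≫ g) = L.otHom (𝟙 A) f ≫ L.otHom (𝟙 A) g := by
  rw [← L.otHom_comp, Category.id_comp]

lemma LD.otHom_comp_id_right {A X Y Z : C} (f : X ⟶ Y) (g : Y ⟶ Z) :
    L.otHom (f ≫ g) (𝟙 A) = L.otHom f (𝟙 A) ≫ L.otHom g (𝟙 A) := by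
  rw [← L.otHom_comp, Category.id_comp]

lemma LD.αInv_natural {A A' B B' E E' : C} (f : A ⟶ A') (g : B ⟶ B') (h : E ⟶ E') :
    L.otHom (L.otHom f g) h ≫ L.αInv A' B' E' = L.αInv A B E ≫ L.otHom f (L.otHom g h) := by
  rw [← cancel_epi (L.α A B E), L.α_αInv_assoc, ← reassoc_of% (L.α_natural f g h),
    L.α_αInv, Category.comp_id]

lemma LD.pentagon_α_α_αInv_αInv_α (A B E D : C) :
    L.α A (L.ot B E) D ≫ L.otHom (L.α A B E) (𝟙 D) ≫ L.αInv (L.ot A B) E D =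
      L.otHom (𝟙 A) (L.αInv B E D) ≫ L.α A B (L.ot E D) := by
  rw [← cancel_epi (L.otHom (𝟙 A) (L.α B E D)), ← reassoc_of% (L.P1 A B E D), L.α_αInv,
    Category.comp_id, ← reassoc_of% (L.otHom_id_left_comp _ _), L.α_αInv, L.otHom_id,
    Category.id_comp]

lemma LD.pentagon_α_αInv_αInv_αInv_α (A B E D : C) :
    L.α (L.ot A B) E D ≫ L.otHom (L.αInv A B E) (𝟙 D) ≫ L.αInv A (L.ot B E) D =
      L.αInv A B (L.ot E D) ≫ L.otHom (𝟙 A) (L.α B E D) := by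
  rw [← cancel_epi (L.α A B (L.ot E D)), reassoc_of% (L.P1 A B E D),
    ← reassoc_of% (L.otHom_comp_id_right _ _), L.α_αInv, L.otHom_id, Category.id_comp,
    L.α_αInv, Category.comp_id, L.α_αInv_assoc]

end Associator

section TauRelations

variable (L : LD C) {X Y Z : C} (f : X ⟶ L.ot Y Z)

lemma LD.α_comp_tau_a_ot (A B : C) (w : YW C) :
    L.α A B (Hot L X w) ≫ tau L f (.a (L.ot A B) w) =
      tau L f (.a A (.a B w)) ≫ L.otHom (L.α A B (Lot L Y w)) (𝟙 (Rot L Z w)) := by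
  have nat := L.α_natural (𝟙 A) (𝟙 B) (tau L f w)
  rw [L.otHom_id] at nat
  simp only [tau, Hot, Lot, Rot, L.otHom_id_left_comp, Category.assoc]
  rw [← reassoc_of% nat, L.P1]

lemma LD.α_comp_tau_ainv_a (A E : C) (w : YW C) :
    L.α A (Hot L X w) E ≫ tau L f (.ainv E (.a A w)) = tau L f (.a A (.ainv E w)) := by
  have nat := L.α_natural (𝟙 A) (tau L f w) (𝟙 E)
  simp only [tau, Hot, Lot, Rot, L.otHom_id_left_comp, L.otHom_comp_id_right, Category.assoc]
  rw [← reassoc_of% nat, L.pentagon_α_α_αInv_αInv_α]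

lemma LD.α_comp_tau_ainv_ainv (B E : C) (w : YW C) :
    L.α (Hot L X w) B E ≫ tau L f (.ainv E (.ainv B w)) =
      tau L f (.ainv (L.ot B E) w) ≫ L.otHom (𝟙 (Lot L Y w)) (L.α (Rot L Z w) B E) := by
  have nat := L.α_natural (tau L f w) (𝟙 B) (𝟙 E)
  rw [L.otHom_id] at nat
  simp only [tau, Hot, Lot, Rot, L.otHom_comp_id_right, Category.assoc]
  rw [← reassoc_of% nat, L.pentagon_α_αInv_αInv_αInv_α]

lemma LD.αInv_comp_tau_a_a (A B : C) (w : YW C) :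
    L.αInv A B (Hot L X w) ≫ tau L f (.a A (.a B w)) =
      tau L f (.a (L.ot A B) w) ≫ L.otHom (L.αInv A B (Lot L Y w)) (𝟙 (Rot L Z w)) := by
  have h := L.α_comp_tau_a_ot f A B w
  simp only [tau, Hot, Lot, Rot, Category.assoc] at h ⊢
  rw [← cancel_epi (L.α A B (Hot L X w)), L.α_αInv_assoc, reassoc_of% h,
    ← L.otHom_comp_id_right, L.α_αInv, L.otHom_id, Category.comp_id]

lemma LD.αInv_comp_tau_a_ainv (A E : C) (w : YW C) :
    L.αInv A (Hot L X w) E ≫ tau L f (.a A (.ainv E w)) = tau L f (.ainv E (.a A w)) := by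
  have h := L.α_comp_tau_ainv_a f A E w
  simp only [tau, Hot, Lot, Rot] at h ⊢
  rw [← h, L.αInv_α_assoc]

lemma LD.αInv_comp_tau_ainv_ot (B E : C) (w : YW C) :
    L.αInv (Hot L X w) B E ≫ tau L f (.ainv (L.ot B E) w) =
      tau L f (.ainv E (.ainv B w)) ≫ L.otHom (𝟙 (Lot L Y w)) (L.αInv (Rot L Z w) B E) := by
  have h := L.α_comp_tau_ainv_ainv f B E w
  simp only [tau, Hot, Lot, Rot, Category.assoc] at h ⊢
  rw [← cancel_epi (L.α (Hot L X w) B E), L.α_αInv_assoc, reassoc_of% h,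
    ← L.otHom_id_left_comp, L.α_αInv, L.otHom_id, Category.comp_id]

lemma LD.tau_a_natural {A A' : C} (g : A ⟶ A') (w : YW C) :
    L.otHom g (𝟙 (Hot L X w)) ≫ tau L f (.a A' w) =
      tau L f (.a A w) ≫ L.otHom (L.otHom g (𝟙 (Lot L Y w))) (𝟙 (Rot L Z w)) := by
  have nat := L.α_natural g (𝟙 (Lot L Y w)) (𝟙 (Rot L Z w))
  rw [L.otHom_id] at nat
  simp only [tau, Hot, Lot, Rot, Category.assoc]
  rw [← nat, ← reassoc_of% L.otHom_comp, ← reassoc_of% L.otHom_comp]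
  simp only [Category.id_comp, Category.comp_id]

lemma LD.tau_ainv_natural {E E' : C} (g : E ⟶ E') (w : YW C) :
    L.otHom (𝟙 (Hot L X w)) g ≫ tau L f (.ainv E' w) =
      tau L f (.ainv E w) ≫ L.otHom (𝟙 (Lot L Y w)) (L.otHom (𝟙 (Rot L Z w)) g) := by
  have nat := L.αInv_natural (𝟙 (Lot L Y w)) (𝟙 (Rot L Z w)) g
  rw [L.otHom_id] at nat
  simp only [tau, Hot, Lot, Rot, Category.assoc]
  rw [← nat, ← reassoc_of% L.otHom_comp, ← reassoc_of% L.otHom_comp]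
  simp only [Category.id_comp, Category.comp_id]

end TauRelations

section Analysable

variable {L : LD C} {𝔣 : ∀ ⦃X Y Z : C⦄, (X ⟶ L.ot Y Z) → Prop}

lemma otAnalysable_tau_comp_otHom {X Y Z Q₁ Q₂ : C} {f : X ⟶ L.ot Y Z} (hf : 𝔣 f) (w : YW C)
    (g' : Lot L Y w ⟶ Q₁) (g'' : Rot L Z w ⟶ Q₂) :
    OtAnalysable L 𝔣 (tau L f w ≫ L.otHom g' g'') :=
  ⟨X, Y, Z, f, hf, w, Q₁, Q₂, g', g'', rfl, rfl, by simp⟩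

lemma otAnalysable_tau {X Y Z : C} {f : X ⟶ L.ot Y Z} (hf : 𝔣 f) (w : YW C) :
    OtAnalysable L 𝔣 (tau L f w) := by
  simpa [L.otHom_id] using otAnalysable_tau_comp_otHom hf w (𝟙 _) (𝟙 _)

lemma OtAnalysable.exists_eq_of_tidy (hL : L.Tidy) {P Q₁ Q₂ : C} {g : P ⟶ L.ot Q₁ Q₂}
    (hg : OtAnalysable L 𝔣 g) :
    ∃ (X Y Z : C) (f : X ⟶ L.ot Y Z), 𝔣 f ∧ ∃ (w : YW C) (g' : Lot L Y w ⟶ Q₁)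
      (g'' : Rot L Z w ⟶ Q₂) (hP : P = Hot L X w), g = eqToHom hP ≫ tau L f w ≫ L.otHom g' g'' := by
  obtain ⟨X, Y, Z, f, hf, w, Q₁', Q₂', g', g'', hP, hT, rfl⟩ := hg
  obtain ⟨rfl, rfl⟩ := hL.1 _ _ _ _ hT
  exact ⟨X, Y, Z, f, hf, w, g', g'', hP, by simp⟩

lemma OtAnalysable.otHom_id_comp_α (hL : L.Tidy) {P Q₁ Q₂ : C} {g : P ⟶ L.ot Q₁ Q₂}
    (hg : OtAnalysable L 𝔣 g) (A : C) :
    OtAnalysable L 𝔣 (L.otHom (𝟙 A) g ≫ L.α A Q₁ Q₂) := by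
  obtain ⟨X, Y, Z, f, hf, w, g', g'', rfl, rfl⟩ := hg.exists_eq_of_tidy hL
  rw [eqToHom_refl, Category.id_comp]
  have h : L.otHom (𝟙 A) (tau L f w ≫ L.otHom g' g'') ≫ L.α A Q₁ Q₂ =
      (L.otHom (𝟙 A) (tau L f w) ≫ L.α A _ _) ≫ L.otHom (L.otHom (𝟙 A) g') g'' := by
    rw [L.otHom_id_left_comp, Category.assoc, L.α_natural, Category.assoc]
  rw [h]
  exact otAnalysable_tau_comp_otHom hf (.a A w) (L.otHom (𝟙 A) g') g''

lemma OtAnalysable.otHom_comp_αInv (hL : L.Tidy) {P Q₁ Q₂ : C} {g : P ⟶ L.ot Q₁ Q₂}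
    (hg : OtAnalysable L 𝔣 g) (A : C) :
    OtAnalysable L 𝔣 (L.otHom g (𝟙 A) ≫ L.αInv Q₁ Q₂ A) := by
  obtain ⟨X, Y, Z, f, hf, w, g', g'', rfl, rfl⟩ := hg.exists_eq_of_tidy hL
  rw [eqToHom_refl, Category.id_comp]
  have h : L.otHom (tau L f w ≫ L.otHom g' g'') (𝟙 A) ≫ L.αInv Q₁ Q₂ A =
      (L.otHom (tau L f w) (𝟙 A) ≫ L.αInv _ _ A) ≫ L.otHom g' (L.otHom g'' (𝟙 A)) := by
    rw [L.otHom_comp_id_right, Category.assoc, L.αInv_natural, Category.assoc]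
  rw [h]
  exact otAnalysable_tau_comp_otHom hf (.ainv A w) g' (L.otHom g'' (𝟙 A))

end Analysable

section Analysis

variable {L : LD C} {𝔣 : ∀ ⦃X Y Z : C⦄, (X ⟶ L.ot Y Z) → Prop} {X Y Z : C} {f : X ⟶ L.ot Y Z}

lemma LD.Tidy.pa_ne_hot (hL : L.Tidy) {w : YW C} (hw : w ≠ .nil) (B E : C) :
    L.pa B E ≠ Hot L X w := by
  cases w with
  | nil => exact absurd rfl hw
  | a A w => exact (hL.2.2 _ _ _ _).symm
  | ainv A w => exact (hL.2.2 _ _ _ _).symm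

lemma not_isParComp_of_target_ne_pa {W T : C} (h : W ⟶ T) (hT : ∀ B E, L.pa B E ≠ T) :
    ¬ IsDlComp L h ∧ ¬ IsDrComp L h ∧ ¬ IsPalphaComp L h ∧ ¬ IsPalphaInvComp L h ∧
      ¬ IsIdPaLeft L h ∧ ¬ IsIdPaRight L h :=
  ⟨fun ⟨_, _, _, _, h₂, _⟩ => hT _ _ h₂, fun ⟨_, _, _, _, h₂, _⟩ => hT _ _ h₂,
    fun ⟨_, _, _, _, h₂, _⟩ => hT _ _ h₂, fun ⟨_, _, _, _, h₂, _⟩ => hT _ _ h₂,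
    fun ⟨_, _, _, _, _, h₂, _⟩ => hT _ _ h₂, fun ⟨_, _, _, _, _, h₂, _⟩ => hT _ _ h₂⟩

lemma eq_ainv_nil_of_isAlphaComp (hL : L.Tidy) (hf : 𝔣 f) {w : YW C} (hw : w ≠ .nil)
    {W : C} {h : W ⟶ Hot L X w} (hα : IsAlphaComp L h)
    (hna : ¬ OtAnalysable L 𝔣 (h ≫ tau L f w)) :
    ∃ A : C, w = .ainv A .nil := by
  obtain ⟨A, B, E, rfl, h₂, rfl⟩ := hα
  rw [eqToHom_refl, Category.id_comp, Category.assoc] at hna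
  -- After the substitutions below, `h₂` relates definitionally (not syntactically) equal objects,
  -- so `eqToHom h₂` is an identity only up to defeq and is removed via `Category.id_comp`.
  rcases w with _ | ⟨A₁, w⟩ | ⟨A₁, _ | ⟨A₂, w⟩ | ⟨A₂, w⟩⟩
  · exact absurd rfl hw
  · obtain ⟨rfl, rfl⟩ := hL.1 _ _ _ _ h₂
    refine absurd ?_ hna
    rw [show eqToHom h₂ ≫ tau L f (.a _ w) = tau L f (.a _ w) from Category.id_comp _,
      L.α_comp_tau_a_ot]
    exact otAnalysable_tau_comp_otHom hf _ _ _
  · exact ⟨A₁, rfl⟩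
  · obtain ⟨hAB, rfl⟩ := hL.1 _ _ _ _ h₂
    obtain ⟨rfl, rfl⟩ := hL.1 _ _ _ _ hAB
    refine absurd ?_ hna
    rw [show eqToHom h₂ ≫ tau L f (.ainv _ (.a _ w)) = tau L f (.ainv _ (.a _ w)) from
      Category.id_comp _, L.α_comp_tau_ainv_a]
    exact otAnalysable_tau hf _
  · obtain ⟨hAB, rfl⟩ := hL.1 _ _ _ _ h₂
    obtain ⟨rfl, rfl⟩ := hL.1 _ _ _ _ hAB
    refine absurd ?_ hna
    rw [show eqToHom h₂ ≫ tau L f (.ainv _ (.ainv _ w)) = tau L f (.ainv _ (.ainv _ w)) from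
      Category.id_comp _, L.α_comp_tau_ainv_ainv]
    exact otAnalysable_tau_comp_otHom hf _ _ _

lemma eq_a_nil_of_isAlphaInvComp (hL : L.Tidy) (hf : 𝔣 f) {w : YW C} (hw : w ≠ .nil)
    {W : C} {h : W ⟶ Hot L X w} (hα : IsAlphaInvComp L h)
    (hna : ¬ OtAnalysable L 𝔣 (h ≫ tau L f w)) :
    ∃ A : C, w = .a A .nil := by
  obtain ⟨A, B, E, rfl, h₂, rfl⟩ := hα
  rw [eqToHom_refl, Category.id_comp, Category.assoc] at hna
  rcases w with _ | ⟨A₁, _ | ⟨A₂, w⟩ | ⟨A₂, w⟩⟩ | ⟨A₁, w⟩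
  · exact absurd rfl hw
  · exact ⟨A₁, rfl⟩
  · obtain ⟨rfl, hBE⟩ := hL.1 _ _ _ _ h₂
    obtain ⟨rfl, rfl⟩ := hL.1 _ _ _ _ hBE
    refine absurd ?_ hna
    rw [show eqToHom h₂ ≫ tau L f (.a _ (.a _ w)) = tau L f (.a _ (.a _ w)) from
      Category.id_comp _, L.αInv_comp_tau_a_a]
    exact otAnalysable_tau_comp_otHom hf _ _ _
  · obtain ⟨rfl, hBE⟩ := hL.1 _ _ _ _ h₂
    obtain ⟨rfl, rfl⟩ := hL.1 _ _ _ _ hBE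
    refine absurd ?_ hna
    rw [show eqToHom h₂ ≫ tau L f (.a _ (.ainv _ w)) = tau L f (.a _ (.ainv _ w)) from
      Category.id_comp _, L.αInv_comp_tau_a_ainv]
    exact otAnalysable_tau hf _
  · obtain ⟨rfl, rfl⟩ := hL.1 _ _ _ _ h₂
    refine absurd ?_ hna
    rw [show eqToHom h₂ ≫ tau L f (.ainv _ w) = tau L f (.ainv _ w) from Category.id_comp _,
      L.αInv_comp_tau_ainv_ot]
    exact otAnalysable_tau_comp_otHom hf _ _ _

lemma exists_eq_a_of_eq_otHom_id_left (hL : L.Tidy) (hf : 𝔣 f) {w : YW C} (hw : w ≠ .nil)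
    {W A W' T' : C} {h : W ⟶ Hot L X w} (h' : W' ⟶ T') (h₁ : W = L.ot A W')
    (h₂ : L.ot A T' = Hot L X w) (hh : h = eqToHom h₁ ≫ L.otHom (𝟙 A) h' ≫ eqToHom h₂)
    (hna : ¬ OtAnalysable L 𝔣 (h ≫ tau L f w)) :
    ∃ w₁ : YW C, w = .a A w₁ ∧ ∃ hT : T' = Hot L X w₁,
      ¬ OtAnalysable L 𝔣 (h' ≫ eqToHom hT ≫ tau L f w₁) := by
  subst h₁ hh
  rw [eqToHom_refl, Category.id_comp, Category.assoc] at hna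
  rcases w with _ | ⟨A₁, w⟩ | ⟨A₁, w⟩
  · exact absurd rfl hw
  · obtain ⟨rfl, rfl⟩ := hL.1 _ _ _ _ h₂
    refine ⟨w, rfl, rfl, fun hana => hna ?_⟩
    rw [eqToHom_refl, Category.id_comp] at hana
    rw [show eqToHom h₂ ≫ tau L f (.a _ w) = tau L f (.a _ w) from Category.id_comp _]
    have key := hana.otHom_id_comp_α hL A
    rw [L.otHom_id_left_comp, Category.assoc] at key
    exact key
  · obtain ⟨rfl, rfl⟩ := hL.1 _ _ _ _ h₂
    refine absurd ?_ hna
    rw [show eqToHom h₂ ≫ tau L f (.ainv _ w) = tau L f (.ainv _ w) from Category.id_comp _,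
      L.tau_ainv_natural]
    exact otAnalysable_tau_comp_otHom hf _ _ _

lemma exists_eq_ainv_of_eq_otHom_id_right (hL : L.Tidy) (hf : 𝔣 f) {w : YW C} (hw : w ≠ .nil)
    {W A W' T' : C} {h : W ⟶ Hot L X w} (h' : W' ⟶ T') (h₁ : W = L.ot W' A)
    (h₂ : L.ot T' A = Hot L X w) (hh : h = eqToHom h₁ ≫ L.otHom h' (𝟙 A) ≫ eqToHom h₂)
    (hna : ¬ OtAnalysable L 𝔣 (h ≫ tau L f w)) :
    ∃ w₁ : YW C, w = .ainv A w₁ ∧ ∃ hT : T' = Hot L X w₁,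
      ¬ OtAnalysable L 𝔣 (h' ≫ eqToHom hT ≫ tau L f w₁) := by
  subst h₁ hh
  rw [eqToHom_refl, Category.id_comp, Category.assoc] at hna
  rcases w with _ | ⟨A₁, w⟩ | ⟨A₁, w⟩
  · exact absurd rfl hw
  · obtain ⟨rfl, rfl⟩ := hL.1 _ _ _ _ h₂
    refine absurd ?_ hna
    rw [show eqToHom h₂ ≫ tau L f (.a _ w) = tau L f (.a _ w) from Category.id_comp _,
      L.tau_a_natural]
    exact otAnalysable_tau_comp_otHom hf _ _ _
  · obtain ⟨rfl, rfl⟩ := hL.1 _ _ _ _ h₂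
    refine ⟨w, rfl, rfl, fun hana => hna ?_⟩
    rw [eqToHom_refl, Category.id_comp] at hana
    rw [show eqToHom h₂ ≫ tau L f (.ainv _ w) = tau L f (.ainv _ w) from Category.id_comp _]
    have key := hana.otHom_comp_αInv hL A
    rw [L.otHom_comp_id_right, Category.assoc] at key
    exact key

end Analysis

/-- Analysis of morphisms `h` into `H^f_u(Ā)` whose composite with `τ^f_u(Ā)` is not
`𝔣`-analysable (Lemma 3.5 of the paper). -/
theorem tau_not_analysable_analysis {C : Type u} [Category.{v} C] (L : LD C) (hTidy : L.Tidy)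
    (𝔣 : ∀ ⦃X Y Z : C⦄, (X ⟶ L.ot Y Z) → Prop)
    (w : YW C) (hw : w ≠ YW.nil)
    {X Y Z : C} (f : X ⟶ L.ot Y Z) (hf : 𝔣 f)
    {W : C} (h : W ⟶ Hot L X w)
    (hna : ¬ OtAnalysable L 𝔣 (h ≫ tau L f w)) :
    (¬ IsDlComp L h ∧ ¬ IsDrComp L h ∧ ¬ IsPalphaComp L h ∧ ¬ IsPalphaInvComp L h ∧
      ¬ IsIdPaLeft L h ∧ ¬ IsIdPaRight L h) ∧
    (IsAlphaComp L h → ∃ A : C, w = YW.ainv A YW.nil) ∧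
    (IsAlphaInvComp L h → ∃ A : C, w = YW.a A YW.nil) ∧
    (∀ (A W' T' : C) (h' : W' ⟶ T') (h₁ : W = L.ot A W') (h₂ : L.ot A T' = Hot L X w),
      h = eqToHom h₁ ≫ L.otHom (𝟙 A) h' ≫ eqToHom h₂ →
      ∃ w₁ : YW C, w = YW.a A w₁ ∧
        ∃ hT : T' = Hot L X w₁,
          ¬ OtAnalysable L 𝔣 (h' ≫ eqToHom hT ≫ tau L f w₁)) ∧
    (∀ (A W' T' : C) (h' : W' ⟶ T') (h₁ : W = L.ot W' A) (h₂ : L.ot T' A = Hot L X w),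
      h = eqToHom h₁ ≫ L.otHom h' (𝟙 A) ≫ eqToHom h₂ →
      ∃ w₁ : YW C, w = YW.ainv A w₁ ∧
        ∃ hT : T' = Hot L X w₁,
          ¬ OtAnalysable L 𝔣 (h' ≫ eqToHom hT ≫ tau L f w₁)) :=
  ⟨not_isParComp_of_target_ne_pa h (hTidy.pa_ne_hot hw),
    fun hα => eq_ainv_nil_of_isAlphaComp hTidy hf hw hα hna,
    fun hα => eq_a_nil_of_isAlphaInvComp hTidy hf hw hα hna,
    fun _ _ _ h' h₁ h₂ hh => exists_eq_a_of_eq_otHom_id_left hTidy hf hw h' h₁ h₂ hh hna,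
    fun _ _ _ h' h₁ h₂ hh => exists_eq_ainv_of_eq_otHom_id_right hTidy hf hw h' h₁ h₂ hh hna⟩

end LDCoherence
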